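/- arXiv:2310.17400 — 7 statements merged into one kernel-verified Lean document; each statement's English description precedes it below -/
import Mathlib

section
/- Let H be a real Hilbert space, L : H → H a bounded self-adjoint Fredholm operator, and let Q be the symmetric bilinear form Q(x,y) = ⟪Lx, y⟫. Let V ⊆ H be a closed subspace of finite codimension such that the restriction of Q to V is nondegenerate (i.e., if x ∈ V and Q(x,y) = 0 for all y ∈ V, then x = 0). Then H is the internal direct sum of V and the Q-orthogonal complement V^{⊥_Q} = { x ∈ H : Q(x,y) = 0 for all y ∈ V }; that is, V ∩ V^{⊥_Q} = {0} and V + V^{⊥_Q} = H. -/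
open scoped RealInnerProductSpace

variable {H : Type*} [NormedAddCommGroup H] [InnerProductSpace ℝ H]

/-- Bounded below on the orthogonal complement of the kernel. -/
lemma exists_bound_ker_orth [CompleteSpace H] (L : H →L[ℝ] H)
    (hker : FiniteDimensional ℝ (LinearMap.ker (L : H →ₗ[ℝ] H)))
    (hrange_closed : IsClosed ((LinearMap.range (L : H →ₗ[ℝ] H) : Submodule ℝ H) : Set H)) :
    ∃ c : ℝ, 0 < c ∧ ∀ x ∈ (LinearMap.ker (L : H →ₗ[ℝ] H))ᗮ, ‖x‖ ≤ c * ‖L x‖ := by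
  haveI : CompleteSpace (LinearMap.range (L : H →ₗ[ℝ] H) : Submodule ℝ H) := hrange_closed.completeSpace_coe
  haveI : CompleteSpace ((LinearMap.ker (L : H →ₗ[ℝ] H))ᗮ : Submodule ℝ H) :=
    (Submodule.isClosed_orthogonal _).completeSpace_coe
  set K := LinearMap.ker (L : H →ₗ[ℝ] H) with hK
  set L₀ : Kᗮ →L[ℝ] (LinearMap.range (L : H →ₗ[ℝ] H) : Submodule ℝ H) :=
    ContinuousLinearMap.codRestrict (L.comp Kᗮ.subtypeL) _
      (fun x => LinearMap.mem_range_self (L : H →ₗ[ℝ] H) (x : H)) with hL₀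
  have hL₀app : ∀ x : Kᗮ, (L₀ x : H) = L (x : H) := fun x => rfl
  have hinj : LinearMap.ker (L₀ : Kᗮ →ₗ[ℝ] (LinearMap.range (L : H →ₗ[ℝ] H) : Submodule ℝ H)) = ⊥ := by
    rw [LinearMap.ker_eq_bot']
    intro x hxy
    have hx : (x : H) ∈ K := by
      have h0 : L (x : H) = 0 := by
        have := congrArg (Subtype.val) hxy
        rw [ContinuousLinearMap.coe_coe, hL₀app] at this
        simpa using this
      simpa [hK, LinearMap.mem_ker] using h0
    have : (x : H) = 0 :=
      (Submodule.disjoint_def.1 (Submodule.orthogonal_disjoint K)) _ hx x.2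
    exact Subtype.ext this
  have hsurj : LinearMap.range (L₀ : Kᗮ →ₗ[ℝ] (LinearMap.range (L : H →ₗ[ℝ] H) : Submodule ℝ H)) = ⊤ := by
    rw [LinearMap.range_eq_top]
    rintro ⟨y, hy⟩
    obtain ⟨z, hz⟩ := hy
    refine ⟨⟨z - (K.orthogonalProjectionOnto z : H),
      (by rw [← Submodule.starProjection_apply]; exact Submodule.sub_starProjection_mem_orthogonal (K := K) z)⟩, ?_⟩
    apply Subtype.ext
    rw [ContinuousLinearMap.coe_coe, hL₀app]
    have hPz : L ((K.orthogonalProjectionOnto z : H)) = 0 := (K.orthogonalProjectionOnto z).2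
    simp [map_sub, hz, show L (K.starProjection z) = 0 from hPz]; exact hz
  set e := ContinuousLinearEquiv.ofBijective L₀ hinj hsurj with he
  have hanti := e.antilipschitz
  refine ⟨(‖(e.symm : (LinearMap.range (L : H →ₗ[ℝ] H) : Submodule ℝ H) →L[ℝ] Kᗮ)‖₊ : ℝ) + 1,
    by positivity, ?_⟩
  intro x hx
  have h1 : ‖(⟨x, hx⟩ : Kᗮ)‖ ≤ ‖(e.symm : (LinearMap.range (L : H →ₗ[ℝ] H) : Submodule ℝ H) →L[ℝ] Kᗮ)‖₊ * ‖e ⟨x, hx⟩‖ := by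
    have := hanti.le_mul_dist (⟨x, hx⟩ : Kᗮ) 0
    simpa [dist_eq_norm] using this
  have h2 : ‖e (⟨x, hx⟩ : Kᗮ)‖ = ‖L x‖ := by
    have : (e (⟨x, hx⟩ : Kᗮ) : H) = L x := hL₀app _
    rw [← this]; rfl
  calc ‖x‖ = ‖(⟨x, hx⟩ : Kᗮ)‖ := rfl
    _ ≤ _ := h1
    _ ≤ _ := by
        rw [h2]
        have := norm_nonneg (L x)
        nlinarith [norm_nonneg (L x)]

lemma fd_orth (V : Submodule ℝ H) (h : FiniteDimensional ℝ (H ⧸ V)) :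
    FiniteDimensional ℝ (Vᗮ : Submodule ℝ H) := by
  apply FiniteDimensional.of_injective (V.mkQ.comp Vᗮ.subtype)
  rw [← LinearMap.ker_eq_bot, LinearMap.ker_eq_bot']
  intro x hx
  have hxV : (x : H) ∈ V := by
    simpa [Submodule.Quotient.mk_eq_zero] using hx
  exact Subtype.ext
    ((Submodule.disjoint_def.1 (Submodule.orthogonal_disjoint V)) _ hxV x.2)

/-- The `Q`-orthogonal complement `V^{⊥_Q} = { x ∈ H : Q(x,y) = 0 for all y ∈ V }` of a
subspace `V`, where `Q(x,y) = ⟪L x, y⟫` is the bilinear form associated to `L`. -/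
def qOrthComplement (L : H →L[ℝ] H) (V : Submodule ℝ H) : Submodule ℝ H where
  carrier := {x : H | ∀ y ∈ V, ⟪L x, y⟫ = 0}
  add_mem' := by
    intro a b ha hb y hy
    simp [map_add, inner_add_left, ha y hy, hb y hy]
  zero_mem' := by
    intro y hy
    simp
  smul_mem' := by
    intro r a ha y hy
    simp [map_smul, real_inner_smul_left, ha y hy]

set_option maxHeartbeats 1000000 in
/-- **Lemma `lemmadirectsum`.** Let `H` be a real Hilbert space, `L : H → H` a bounded
self-adjoint Fredholm operator and `Q(x,y) = ⟪L x, y⟫` the associated symmetric bilinear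
form. If `V ⊆ H` is a closed subspace of finite codimension such that the restriction of
`Q` to `V` is nondegenerate, then `H` is the internal direct sum of `V` and its
`Q`-orthogonal complement `V^{⊥_Q}`. -/
theorem directSum_of_nondegenerate_restriction
    [CompleteSpace H]
    (L : H →L[ℝ] H) (hsa : IsSelfAdjoint L)
    (hker : FiniteDimensional ℝ (LinearMap.ker (L : H →ₗ[ℝ] H)))
    (hrange_closed : IsClosed ((LinearMap.range (L : H →ₗ[ℝ] H) : Submodule ℝ H) : Set H))
    (hcoker : FiniteDimensional ℝ (H ⧸ (LinearMap.range (L : H →ₗ[ℝ] H) : Submodule ℝ H)))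
    (V : Submodule ℝ H) (hVclosed : IsClosed (V : Set H))
    (hVcodim : FiniteDimensional ℝ (H ⧸ V))
    (hnondeg : ∀ x ∈ V, (∀ y ∈ V, ⟪L x, y⟫ = 0) → x = 0) :
    V ⊓ qOrthComplement L V = ⊥ ∧ V ⊔ qOrthComplement L V = ⊤ := by
  classical
  haveI hVc : CompleteSpace V := hVclosed.completeSpace_coe
  haveI : FiniteDimensional ℝ (Vᗮ : Submodule ℝ H) := fd_orth V hVcodim
  haveI : CompleteSpace (LinearMap.ker (L : H →ₗ[ℝ] H)) := FiniteDimensional.complete ℝ _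
  set K := LinearMap.ker (L : H →ₗ[ℝ] H) with hKdef
  set T : V →L[ℝ] V := (V.orthogonalProjectionOnto).comp (L.comp V.subtypeL) with hTdef
  have hTapp : ∀ u : V, T u = V.orthogonalProjectionOnto (L (u : H)) := fun u => rfl
  -- key inner-product identity
  have hQ : ∀ (z y : H), y ∈ V → ⟪L z, y⟫ = ⟪((V.orthogonalProjectionOnto (L z)) : H), y⟫ := by
    intro z y hy
    have h1 : L z - (V.orthogonalProjectionOnto (L z) : H) ∈ Vᗮ :=
      (by rw [← Submodule.starProjection_apply]; exact Submodule.sub_starProjection_mem_orthogonal (K := V) (L z))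
    have h2 : ⟪y, L z - (V.orthogonalProjectionOnto (L z) : H)⟫ = 0 :=
      (Submodule.mem_orthogonal V _).1 h1 y hy
    have h3 : ⟪L z - (V.orthogonalProjectionOnto (L z) : H), y⟫ = 0 := by
      rw [real_inner_comm]; exact h2
    rw [inner_sub_left, sub_eq_zero] at h3
    exact h3
  -- T is injective
  have hTinj : ∀ u : V, T u = 0 → u = 0 := by
    intro u hu
    have : (u : H) = 0 := by
      apply hnondeg _ u.2
      intro y hy
      rw [hQ _ y hy, ← hTapp, hu]
      simp
    exact Subtype.ext this
  -- bounded below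
  have hbdd : ∃ c : ℝ, ∀ u : V, ‖u‖ ≤ c * ‖T u‖ := by
    by_contra hcon
    push_neg at hcon
    choose x hx using hcon
    -- normalized sequence
    set u : ℕ → V := fun n => ‖x ((n : ℝ) + 1)‖⁻¹ • x ((n : ℝ) + 1) with hu
    have hxpos : ∀ n : ℕ, 0 < ‖x ((n : ℝ) + 1)‖ := by
      intro n
      have h := hx ((n : ℝ) + 1)
      have : 0 ≤ ((n : ℝ) + 1) * ‖T (x ((n : ℝ) + 1))‖ := by positivity
      linarith
    have hu1 : ∀ n, ‖u n‖ = 1 := by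
      intro n
      rw [hu]
      simp only [norm_smul, norm_inv, norm_norm]
      exact inv_mul_cancel₀ (hxpos n).ne'
    have hTu : ∀ n : ℕ, ‖T (u n)‖ ≤ 1 / ((n : ℝ) + 1) := by
      intro n
      have h := hx ((n : ℝ) + 1)
      rw [hu]
      simp only [map_smul, norm_smul, norm_inv, norm_norm]
      have hn1 : (0:ℝ) < (n:ℝ) + 1 := by positivity
      have h2 : ‖T (x ((n : ℝ) + 1))‖ ≤ ‖x ((n : ℝ) + 1)‖ / ((n:ℝ)+1) := by
        rw [le_div_iff₀ hn1]; nlinarith [h]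
      calc ‖x ((n : ℝ) + 1)‖⁻¹ * ‖T (x ((n : ℝ) + 1))‖
          ≤ ‖x ((n : ℝ) + 1)‖⁻¹ * (‖x ((n : ℝ) + 1)‖ / ((n:ℝ)+1)) :=
            mul_le_mul_of_nonneg_left h2 (by positivity)
        _ = 1/((n:ℝ)+1) := by
            field_simp
            exact div_self (ne_of_gt (hxpos n))
    -- T (u n) → 0
    have hT0 : Filter.Tendsto (fun n => T (u n)) Filter.atTop (nhds 0) := by
      rw [tendsto_zero_iff_norm_tendsto_zero]
      apply squeeze_zero (fun n => norm_nonneg _) hTu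
      exact tendsto_one_div_add_atTop_nhds_zero_nat
    -- sequence in H
    set v : ℕ → H := fun n => (u n : H) with hv
    have hvV : ∀ n, v n ∈ V := fun n => (u n).2
    have hv1 : ∀ n, ‖v n‖ = 1 := fun n => hu1 n
    -- the V-orthogonal parts of L (v n)
    set w : ℕ → (Vᗮ : Submodule ℝ H) := fun n =>
      ⟨L (v n) - (V.orthogonalProjectionOnto (L (v n)) : H),
        (by rw [← Submodule.starProjection_apply]; exact Submodule.sub_starProjection_mem_orthogonal (K := V) (L (v n)))⟩ with hw
    have hwval : ∀ n, (w n : H) = L (v n) - (T (u n) : H) := by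
      intro n; rw [hw]; simp [hTapp]; rfl
    have hwbdd : ∀ n, ‖w n‖ ≤ ‖L‖ + ‖T‖ := by
      intro n
      have : ‖(w n : H)‖ ≤ ‖L (v n)‖ + ‖(T (u n) : H)‖ := by
        rw [hwval n]; exact norm_sub_le _ _
      have h1 : ‖L (v n)‖ ≤ ‖L‖ := by
        calc ‖L (v n)‖ ≤ ‖L‖ * ‖v n‖ := L.le_opNorm _
          _ = ‖L‖ := by rw [hv1 n, mul_one]
      have h2 : ‖(T (u n) : H)‖ ≤ ‖T‖ := by
        calc ‖(T (u n) : H)‖ = ‖T (u n)‖ := rfl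
          _ ≤ ‖T‖ * ‖u n‖ := T.le_opNorm _
          _ = ‖T‖ := by rw [hu1 n, mul_one]
      calc ‖w n‖ = ‖(w n : H)‖ := rfl
        _ ≤ ‖L (v n)‖ + ‖(T (u n) : H)‖ := this
        _ ≤ ‖L‖ + ‖T‖ := add_le_add h1 h2
    -- extract convergent subsequence of w (finite-dimensional)
    obtain ⟨wlim, -, φ, hφ, hwconv⟩ :=
      tendsto_subseq_of_bounded (Metric.isBounded_closedBall
        (x := (0 : (Vᗮ : Submodule ℝ H))) (r := ‖L‖ + ‖T‖))
        (fun n => Metric.mem_closedBall.2 (by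
          rw [dist_zero_right]; exact hwbdd n))
    -- projections onto the kernel
    set a : ℕ → K := fun n => K.orthogonalProjectionOnto (v n) with ha
    have habdd : ∀ n, ‖a n‖ ≤ 1 := by
      intro n
      calc ‖a n‖ ≤ ‖K.orthogonalProjectionOnto‖ * ‖v n‖ :=
            (K.orthogonalProjectionOnto).le_opNorm _
        _ ≤ 1 * 1 := by
            apply mul_le_mul (Submodule.orthogonalProjectionOnto_norm_le K) (le_of_eq (hv1 n))
              (norm_nonneg _) zero_le_one
        _ = 1 := one_mul 1
    obtain ⟨alim, -, ψ, hψ, haconv⟩ :=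
      tendsto_subseq_of_bounded (Metric.isBounded_closedBall (x := (0 : K)) (r := 1))
        (fun n => Metric.mem_closedBall.2 (by
          rw [dist_zero_right]; exact habdd (φ n)))
    set σ : ℕ → ℕ := φ ∘ ψ with hσ
    have hσmono : StrictMono σ := hφ.comp hψ
    -- the kernel-orthogonal parts
    set b : ℕ → H := fun n => v n - (a n : H) with hb
    have hbmem : ∀ n, b n ∈ Kᗮ := fun n => (by show v n - ((K.orthogonalProjectionOnto (v n) : K) : H) ∈ Kᗮ; rw [← Submodule.starProjection_apply]; exact Submodule.sub_starProjection_mem_orthogonal (K := K) (v n))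
    have hLb : ∀ n, L (b n) = (T (u n) : H) + (w n : H) := by
      intro n
      have hLa : L ((a n : H)) = 0 := (a n).2
      have h2 : L (b n) = L (v n) := by rw [hb]; rw [map_sub, hLa, sub_zero]
      rw [h2, hwval n, hTapp]
      abel
    -- L (b (σ n)) converges
    have hTu0 : Filter.Tendsto (fun n => ((T (u (σ n))) : H)) Filter.atTop (nhds 0) := by
      have h1 : Filter.Tendsto (fun n => T (u (σ n))) Filter.atTop (nhds 0) :=
        hT0.comp (hσmono.tendsto_atTop)
      have := (continuous_subtype_val.tendsto (0 : V)).comp h1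
      exact this
    have hwconv' : Filter.Tendsto (fun n => ((w (σ n)) : H)) Filter.atTop (nhds (wlim : H)) := by
      have h1 : Filter.Tendsto (fun n => w (σ n)) Filter.atTop (nhds wlim) :=
        hwconv.comp hψ.tendsto_atTop
      exact (continuous_subtype_val.tendsto wlim).comp h1
    have hLbconv : Filter.Tendsto (fun n => L (b (σ n))) Filter.atTop (nhds (wlim : H)) := by
      have := hTu0.add hwconv'
      rw [zero_add] at this
      convert this using 2 with n
      exact hLb (σ n)
    -- b (σ n) is Cauchy, via boundedness below of L on Kᗮ
    obtain ⟨c, hc, hcb⟩ := exists_bound_ker_orth L hker hrange_closed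
    have hbCauchy : CauchySeq (fun n => b (σ n)) := by
      have hLC : CauchySeq (fun n => L (b (σ n))) := hLbconv.cauchySeq
      rw [Metric.cauchySeq_iff] at hLC ⊢
      intro ε hε
      obtain ⟨N, hN⟩ := hLC (ε / c) (by positivity)
      refine ⟨N, fun m hm n hn => ?_⟩
      have hmem : b (σ m) - b (σ n) ∈ Kᗮ := sub_mem (hbmem _) (hbmem _)
      have h1 : ‖b (σ m) - b (σ n)‖ ≤ c * ‖L (b (σ m) - b (σ n))‖ := hcb _ hmem
      have h2 : ‖L (b (σ m)) - L (b (σ n))‖ < ε / c := by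
        have := hN m hm n hn
        rwa [dist_eq_norm] at this
      rw [dist_eq_norm]
      calc ‖b (σ m) - b (σ n)‖ ≤ c * ‖L (b (σ m) - b (σ n))‖ := h1
        _ = c * ‖L (b (σ m)) - L (b (σ n))‖ := by rw [map_sub]
        _ < c * (ε / c) := by exact (mul_lt_mul_iff_right₀ hc).2 h2
        _ = ε := by field_simp
    obtain ⟨blim, hbconv⟩ := cauchySeq_tendsto_of_complete hbCauchy
    -- the limit point
    have haconv' : Filter.Tendsto (fun n => ((a (σ n)) : H)) Filter.atTop (nhds (alim : H)) :=
      (continuous_subtype_val.tendsto alim).comp haconv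
    have hvconv : Filter.Tendsto (fun n => v (σ n)) Filter.atTop (nhds ((alim : H) + blim)) := by
      have h := haconv'.add hbconv
      have heq : (fun n => ((a (σ n)) : H) + b (σ n)) = fun n => v (σ n) := by
        funext n
        show ((a (σ n)) : H) + ((fun k => v k - ((a k) : H)) (σ n)) = v (σ n)
        simp only []
        abel
      rwa [heq] at h
    set z : H := (alim : H) + blim with hz
    have hzV : z ∈ V := hVclosed.mem_of_tendsto hvconv
      (Filter.Eventually.of_forall (fun n => hvV (σ n)))
    have hz1 : ‖z‖ = 1 := by
      have h1 : Filter.Tendsto (fun n => ‖v (σ n)‖) Filter.atTop (nhds ‖z‖) := hvconv.norm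
      have h2 : Filter.Tendsto (fun n => ‖v (σ n)‖) Filter.atTop (nhds 1) := by
        simpa [hv1] using tendsto_const_nhds (x := (1:ℝ)) (f := Filter.atTop (α := ℕ))
      exact tendsto_nhds_unique h1 h2
    have hPz : V.orthogonalProjectionOnto (L z) = 0 := by
      have h1 : Filter.Tendsto (fun n => V.orthogonalProjectionOnto (L (v (σ n))))
          Filter.atTop (nhds (V.orthogonalProjectionOnto (L z))) :=
        (((V.orthogonalProjectionOnto).continuous.comp L.continuous).tendsto z).comp hvconv
      have h2 : Filter.Tendsto (fun n => V.orthogonalProjectionOnto (L (v (σ n))))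
          Filter.atTop (nhds 0) := by
        have : (fun n => V.orthogonalProjectionOnto (L (v (σ n)))) = fun n => T (u (σ n)) := by
          funext n; rw [hTapp]
        rw [this]
        exact hT0.comp hσmono.tendsto_atTop
      exact tendsto_nhds_unique h1 h2
    have hz0 : z = 0 := by
      apply hnondeg _ hzV
      intro y hy
      rw [hQ z y hy, hPz]
      simp
    rw [hz0, norm_zero] at hz1
    exact one_ne_zero hz1.symm
  -- upgrade to antilipschitz and bijectivity
  obtain ⟨c, hbddc⟩ := hbdd
  have hanti : AntilipschitzWith c.toNNReal T :=
    T.antilipschitz_of_bound (fun x => le_trans (hbddc x)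
      (mul_le_mul_of_nonneg_right (Real.le_coe_toNNReal c) (norm_nonneg _)))
  have hdense : (LinearMap.range (T : V →ₗ[ℝ] V)).topologicalClosure = ⊤ := by
    rw [← Submodule.orthogonal_orthogonal_eq_closure]
    have hbot : (LinearMap.range (T : V →ₗ[ℝ] V))ᗮ = ⊥ := by
      rw [Submodule.eq_bot_iff]
      intro y hy
      have hy' : ∀ zz ∈ LinearMap.range (T : V →ₗ[ℝ] V), ⟪zz, y⟫ = 0 :=
        (Submodule.mem_orthogonal _ _).1 hy
      have : (y : H) = 0 := by
        apply hnondeg _ y.2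
        intro z hz
        have h1 : ⟪L z, (y : H)⟫ = ⟪((T ⟨z, hz⟩ : V) : H), (y : H)⟫ := by
          rw [hQ z (y : H) y.2, hTapp]
        have h2 : ⟪(T ⟨z, hz⟩ : V), y⟫ = 0 :=
          hy' _ (LinearMap.mem_range_self (T : V →ₗ[ℝ] V) ⟨z, hz⟩)
        rw [real_inner_comm] at h1
        rw [← Submodule.coe_inner] at h1
        calc ⟪L (y : H), z⟫ = ⟪(y : H), L z⟫ := hsa.isSymmetric (y : H) z
          _ = 0 := by rw [h1]; exact h2
      exact Subtype.ext this
    rw [hbot, Submodule.bot_orthogonal_eq_top]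
  have hbij : Function.Bijective T :=
    (T.bijective_iff_dense_range_and_antilipschitz).2 ⟨hdense, c.toNNReal, hanti⟩
  constructor
  · rw [eq_bot_iff]
    intro x hx
    rw [Submodule.mem_inf] at hx
    have := hnondeg x hx.1 hx.2
    simpa [Submodule.mem_bot] using this
  · rw [eq_top_iff]
    intro x _
    obtain ⟨u0, hu0⟩ := hbij.2 (V.orthogonalProjectionOnto (L x))
    refine Submodule.mem_sup.2 ⟨(u0 : H), u0.2, x - (u0 : H), ?_, by abel⟩
    intro y hy
    have h1 := hQ x y hy
    have h2 := hQ (u0 : H) y hy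
    have h3 : V.orthogonalProjectionOnto (L ((u0 : H))) = V.orthogonalProjectionOnto (L x) := by
      rw [← hTapp, hu0]
    rw [map_sub, inner_sub_left, h1, h2, h3, sub_self]
end

section
/- Let V be a real vector space and g a symmetric bilinear form on V. Let R₀ : V → V be a g-symmetric linear map, Y : V → V a g-antisymmetric linear map, c ∈ V, and let P be a linear map assigning to each u ∈ V a linear map P(u) : V → V, such that: (i) P(u) is g-antisymmetric for every u ∈ V, and (ii) g(u, P(v)(w)) + g(v, P(w)(u)) + g(w, P(u)(v)) = 0 for all u, v, w ∈ V. Then the linear map K : V → V defined by K(v) = R₀(v) + (1/2)·P(c)(v) − P(v)(c) − (1/4)·Y(Y(v)) is g-symmetric: g(K(u), v) = g(u, K(v)) for all u, v ∈ V. -/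
/-!
Compute the `g`-adjoint of each term of `K`. `R₀` and `Y²` are self-adjoint and `P c` is skew,
but `v ↦ P v c` is not: the cyclic identity together with the skewness of the `P u` shows that
its adjoint is `v ↦ P v c - P c v`. In `½ P c - P(·) c` the defects `-P c` and `+P c` of the
two adjoints cancel.
-/

namespace LinearMap.BilinForm

variable {R M : Type*} [CommRing R] [AddCommGroup M] [Module R M] {B : LinearMap.BilinForm R M}

theorem IsSkewAdjoint.isSelfAdjoint_mul_self {Y : Module.End R M} (hY : B.IsSkewAdjoint Y) :
    B.IsSelfAdjoint (Y * Y) := fun u v => by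
  simp only [Module.End.mul_apply, hY u, hY (Y u), Pi.neg_apply, map_neg, neg_neg]

theorem isAdjointPair_flip_of_cyclic (hB : B.IsSymm) {P : M →ₗ[R] M →ₗ[R] M}
    (hP : ∀ u, B.IsSkewAdjoint (P u))
    (hcyc : ∀ u v w, B u (P v w) + B v (P w u) + B w (P u v) = 0) (c : M) :
    IsAdjointPair B B (P.flip c) (P.flip c - P c) := fun u v => by
  have hskew : B (P u c) v = -B c (P u v) := by simp [hP u c v]
  have hcyc' : B v (P c u) = -B u (P c v) := by rw [hB.eq, hP c u v]; simp
  simp only [LinearMap.flip_apply, Pi.sub_apply, map_sub]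
  linear_combination hskew - hcyc v c u + hcyc'

theorem isAdjointPair_smul_sub_flip (hB : B.IsSymm) {P : M →ₗ[R] M →ₗ[R] M}
    (hP : ∀ u, B.IsSkewAdjoint (P u))
    (hcyc : ∀ u v w, B u (P v w) + B v (P w u) + B w (P u v) = 0) (a : R) (c : M) :
    IsAdjointPair B B (a • P c - P.flip c) ((1 - a) • P c - P.flip c) := by
  have h := ((hP c).smul a).sub (isAdjointPair_flip_of_cyclic hB hP hcyc c)
  rwa [show a • -⇑(P c) - (⇑(P.flip c) - ⇑(P c)) = (1 - a) • ⇑(P c) - ⇑(P.flip c) by module] at h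

end LinearMap.BilinForm

open LinearMap LinearMap.BilinForm in
/-- **Lemma `lemmaoperators`(1) (linear-algebraic form).** Let `V` be a real vector space
and `g` a symmetric bilinear form on `V`. Let `R₀` be a `g`-symmetric endomorphism, `Y` a
`g`-antisymmetric endomorphism, `c ∈ V`, and `P` a linear map assigning to each `u ∈ V` a
`g`-antisymmetric endomorphism `P u`, satisfying the cyclic identity
`g(u, P v w) + g(v, P w u) + g(w, P u v) = 0`. Then the map
`K v = R₀ v + (1/2) • P c v − P v c − (1/4) • Y (Y v)` is `g`-symmetric. -/
theorem jacobiOperator_isSymm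
    (V : Type*) [AddCommGroup V] [Module ℝ V]
    (g : LinearMap.BilinForm ℝ V) (hg : ∀ u v : V, g u v = g v u)
    (R₀ : V →ₗ[ℝ] V) (hR₀ : ∀ u v : V, g (R₀ u) v = g u (R₀ v))
    (Y : V →ₗ[ℝ] V) (hY : ∀ u v : V, g (Y u) v = - g u (Y v))
    (c : V)
    (P : V →ₗ[ℝ] (V →ₗ[ℝ] V))
    (hPanti : ∀ u v w : V, g (P u v) w = - g v (P u w))
    (hPcyc : ∀ u v w : V, g u (P v w) + g v (P w u) + g w (P u v) = 0) :
    ∀ u v : V,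
      g (R₀ u + (1/2 : ℝ) • P c u - P u c - (1/4 : ℝ) • Y (Y u)) v
        = g u (R₀ v + (1/2 : ℝ) • P c v - P v c - (1/4 : ℝ) • Y (Y v)) := by
  have isSkew {T : V →ₗ[ℝ] V} (hT : ∀ u v, g (T u) v = -g u (T v)) : g.IsSkewAdjoint T :=
    fun u v => (hT u v).trans (map_neg _ _).symm
  have hPc := isAdjointPair_smul_sub_flip ⟨hg⟩ (fun u => isSkew (hPanti u)) hPcyc (1/2) c
  rw [show (1 : ℝ) - 1/2 = 1/2 by norm_num] at hPc
  have hK := ((show g.IsSelfAdjoint R₀ from hR₀).add hPc).sub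
    ((IsSkewAdjoint.isSelfAdjoint_mul_self (isSkew hY)).smul (1/4 : ℝ))
  intro u v
  simpa [add_sub_assoc] using hK u v
end

section
/- Let V be a finite-dimensional real normed vector space, g a symmetric bilinear form on V, and T > 0. Let Y : [0,T] → End(V) be continuous with Y(t) g-antisymmetric for every t, let c : [0,T] → V be differentiable with c'(t) = Y(t)(c(t)) for all t, let A : [0,T] → End(V) be continuous with g(A(t)(u), c(t)) = 0 for all u ∈ V and all t ∈ [0,T], and let β ∈ ℝ. If J : [0,T] → V is twice differentiable and satisfies J''(t) + A(t)(J(t)) − Y(t)(J'(t)) − β·Y(t)(c(t)) = 0 for all t ∈ [0,T], then the function t ↦ g(J'(t), c(t)) is constant on [0,T]. -/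
/-- **Lemma `lemmajacobi` (in a parallel frame).** Let `V` be a finite-dimensional real
normed vector space, `g` a symmetric bilinear form on `V` and `T > 0`. Let
`Y : [0,T] → End(V)` be continuous with each `Y t` `g`-antisymmetric, let `c` be
differentiable with `c' = Y t (c t)`, let `A : [0,T] → End(V)` be continuous with
`g (A t u) (c t) = 0` for all `u`, and let `β ∈ ℝ`. If `J` is twice differentiable and
satisfies `J'' + A t (J t) − Y t (J' t) − β • Y t (c t) = 0` on `[0,T]`, then
`t ↦ g (J' t) (c t)` is constant on `[0,T]`. -/
theorem inner_deriv_tangent_const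
    (V : Type*) [NormedAddCommGroup V] [NormedSpace ℝ V] [FiniteDimensional ℝ V]
    (g : LinearMap.BilinForm ℝ V) (hg : ∀ u v : V, g u v = g v u)
    (T : ℝ) (hT : 0 < T)
    (Y : ℝ → (V →L[ℝ] V)) (hYcont : ContinuousOn Y (Set.Icc 0 T))
    (hYanti : ∀ t ∈ Set.Icc (0:ℝ) T, ∀ u v : V, g (Y t u) v = - g u (Y t v))
    (c : ℝ → V)
    (hc : ∀ t ∈ Set.Icc (0:ℝ) T, HasDerivWithinAt c (Y t (c t)) (Set.Icc 0 T) t)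
    (A : ℝ → (V →L[ℝ] V)) (hAcont : ContinuousOn A (Set.Icc 0 T))
    (hAc : ∀ t ∈ Set.Icc (0:ℝ) T, ∀ u : V, g (A t u) (c t) = 0)
    (β : ℝ)
    (J J' J'' : ℝ → V)
    (hJ : ∀ t ∈ Set.Icc (0:ℝ) T, HasDerivWithinAt J (J' t) (Set.Icc 0 T) t)
    (hJ' : ∀ t ∈ Set.Icc (0:ℝ) T, HasDerivWithinAt J' (J'' t) (Set.Icc 0 T) t)
    (hODE : ∀ t ∈ Set.Icc (0:ℝ) T,
      J'' t + A t (J t) - Y t (J' t) - β • Y t (c t) = 0) :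
    ∀ t₁ ∈ Set.Icc (0:ℝ) T, ∀ t₂ ∈ Set.Icc (0:ℝ) T,
      g (J' t₁) (c t₁) = g (J' t₂) (c t₂) := by
  classical
  set gL : V →ₗ[ℝ] (V →L[ℝ] ℝ) :=
    { toFun := fun u => LinearMap.toContinuousLinearMap (g u)
      map_add' := by intro u v; ext w; simp
      map_smul' := by intro r u; ext w; simp } with hgL
  set G : V →L[ℝ] (V →L[ℝ] ℝ) := LinearMap.toContinuousLinearMap gL with hG
  have hGapp : ∀ u v : V, G u v = g u v := fun u v => rfl
  set f : ℝ → ℝ := fun t => g (J' t) (c t) with hf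
  have hfd : ∀ t ∈ Set.Icc (0:ℝ) T,
      HasDerivWithinAt f 0 (Set.Icc 0 T) t := by
    intro t ht
    have h1 : HasDerivWithinAt (fun s => G (J' s)) (G (J'' t)) (Set.Icc 0 T) t :=
      G.hasFDerivAt.comp_hasDerivWithinAt t (hJ' t ht)
    have h2 := h1.clm_apply (hc t ht)
    have hJJ : J'' t = Y t (J' t) + β • Y t (c t) - A t (J t) := by
      have h := hODE t ht
      have h' : J'' t + A t (J t) - Y t (J' t) - β • Y t (c t)
          + (Y t (J' t) + β • Y t (c t) - A t (J t)) =
          0 + (Y t (J' t) + β • Y t (c t) - A t (J t)) := by rw [h]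
      rw [zero_add] at h'
      rw [← h']
      abel
    have hcYc : g (c t) (Y t (c t)) = 0 := by
      have h := hYanti t ht (c t) (c t)
      have h2 := hg (Y t (c t)) (c t)
      linarith
    have key : G (J'' t) (c t) + G (J' t) (Y t (c t)) = 0 := by
      rw [hGapp, hGapp, hJJ]
      simp only [map_add, map_sub, map_smul, LinearMap.add_apply, LinearMap.sub_apply,
        LinearMap.smul_apply, smul_eq_mul]
      have hA := hAc t ht (J t)
      have hY := hYanti t ht (J' t) (c t)
      have hz : g (Y t (c t)) (c t) = 0 := by rw [hg (Y t (c t)) (c t)]; exact hcYc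
      rw [hz, hA, hY]
      ring
    have h3 : HasDerivWithinAt (fun s => G (J' s) (c s)) 0 (Set.Icc 0 T) t := by
      exact h2.congr_deriv key
    have heq : (fun s => G (J' s) (c s)) = f := by
      funext s; rw [hf, hGapp]
    rwa [heq] at h3
  have hfc : ContinuousOn f (Set.Icc 0 T) := fun t ht => (hfd t ht).continuousWithinAt
  have hconst : ∀ t ∈ Set.Icc (0:ℝ) T, f t = f 0 := by
    apply constant_of_has_deriv_right_zero hfc
    intro x hx
    exact (hfd x ⟨hx.1, le_of_lt hx.2⟩).mono_of_mem_nhdsWithin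
      (Icc_mem_nhdsGE_of_mem hx)
  intro t₁ ht₁ t₂ ht₂
  calc g (J' t₁) (c t₁) = f 0 := hconst t₁ ht₁
    _ = g (J' t₂) (c t₂) := (hconst t₂ ht₂).symm
end

section
/- Let V be a finite-dimensional real normed vector space, g a nondegenerate symmetric bilinear form on V, κ ≠ 0 a real number, and T > 0. Let Y : [0,T] → End(V) be continuously differentiable with Y(t) g-antisymmetric for every t; let c : [0,T] → V be differentiable with c'(t) = Y(t)(c(t)) for all t and g(c(0), c(0)) = 2κ (hence g(c(t), c(t)) = 2κ for all t); let R : [0,T] → End(V) with R(t)(c(t)) = 0 for all t; and let P : [0,T] → Hom(V, End(V)) with P(t)(c(t)) = Y'(t) for all t. Call a twice differentiable J : [0,T] → V an energy-constrained Jacobi field if J''(t) + R(t)(J(t)) − P(t)(J(t))(c(t)) − Y(t)(J'(t)) − (1/(2κ))·g(J'(0), c(0))·Y(t)(c(t)) = 0 for all t ∈ [0,T]. Then a twice differentiable J : [0,T] → V satisfies: J is an energy-constrained Jacobi field with J(t) ∈ span{c(t)} for every t, if and only if there exist a, b ∈ ℝ with J(t) = (a + b·t)·c(t) for all t ∈ [0,T].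 -/
variable {V : Type*} [NormedAddCommGroup V] [NormedSpace ℝ V]

/-- `J : [0,T] → V` is an energy-constrained Jacobi field (in a parallel frame along an
electromagnetic geodesic of energy `κ`) if it is twice differentiable on `[0,T]` and
satisfies
`J'' + R t (J t) − P t (J t) (c t) − Y t (J' t) − (1/(2κ))·g(J'(0), c(0)) • Y t (c t) = 0`. -/
def IsECJacobiField (T κ : ℝ) (g : LinearMap.BilinForm ℝ V)
    (Y R : ℝ → (V →L[ℝ] V)) (P : ℝ → (V →ₗ[ℝ] (V →L[ℝ] V)))
    (c : ℝ → V) (J : ℝ → V) : Prop :=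
  ∃ J' J'' : ℝ → V,
    (∀ t ∈ Set.Icc (0:ℝ) T, HasDerivWithinAt J (J' t) (Set.Icc 0 T) t) ∧
    (∀ t ∈ Set.Icc (0:ℝ) T, HasDerivWithinAt J' (J'' t) (Set.Icc 0 T) t) ∧
    (∀ t ∈ Set.Icc (0:ℝ) T,
      J'' t + R t (J t) - P t (J t) (c t) - Y t (J' t)
        - ((1 / (2 * κ)) * g (J' 0) (c 0)) • Y t (c t) = 0)

/-! Write a tangent field as `J = f • c`. Because each `Y t` is `g`-skew, the energy
`g (c, c) = 2κ` is conserved and `g (Y' c, c) = 0`; pairing the Jacobi equation with `c` then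
kills every term except `g (J'', c) + g (J', Y c) = (g (J', c))'`, so `g (J', c)` is constant.
As `(g (J, c))' = g (J', c)`, the coefficient `f = g (J, c) / 2κ` is affine. Conversely, for
`J = (a + b t) • c` the constraint coefficient `g (J' 0, c 0) / 2κ` equals `b`, and the
equation holds identically. -/

open Set

theorem Convex.eq_add_smul_of_hasDerivWithinAt {E : Type*} [NormedAddCommGroup E]
    [NormedSpace ℝ E] {s : Set ℝ} (hs : Convex ℝ s) {f : ℝ → E} {v : E}
    (hf : ∀ t ∈ s, HasDerivWithinAt f v s t) {x y : ℝ} (hx : x ∈ s) (hy : y ∈ s) :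
    f y = f x + (y - x) • v := by
  have h := hs.norm_image_sub_le_of_norm_hasFDerivWithin_le'
    (φ := ContinuousLinearMap.toSpanSingleton ℝ v) (C := 0)
    (fun t ht => (hf t ht).hasFDerivWithinAt) (by simp) hx hy
  rw [zero_mul, norm_le_zero_iff, sub_sub, sub_eq_zero] at h
  simpa using h

theorem LinearMap.BilinForm.hasDerivWithinAt_apply [FiniteDimensional ℝ V]
    (g : LinearMap.BilinForm ℝ V) {u v : ℝ → V} {u' v' : V} {s : Set ℝ} {t : ℝ}
    (hu : HasDerivWithinAt u u' s t) (hv : HasDerivWithinAt v v' s t) :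
    HasDerivWithinAt (fun t => g (u t) (v t)) (g (u t) v' + g u' (v t)) s t :=
  g.toContinuousBilinearMap.hasDerivWithinAt_of_bilinear hu hv

theorem LinearMap.BilinForm.apply_self_eq_zero_of_skew {M : Type*} [AddCommGroup M]
    [Module ℝ M] {g : LinearMap.BilinForm ℝ M} (hsymm : ∀ u v, g u v = g v u) {S : M → M}
    (hS : ∀ u v, g (S u) v = -g u (S v)) (u : M) : g (S u) u = 0 := by
  linarith [hS u u, hsymm u (S u)]

theorem LinearMap.BilinForm.eq_smul_of_mem_span_singleton {K M : Type*} [Field K]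
    [AddCommGroup M] [Module K M] (g : LinearMap.BilinForm K M) {v w : M}
    (hw : g w w ≠ 0) (hv : v ∈ Submodule.span K {w}) : v = (g v w / g w w) • w := by
  obtain ⟨r, rfl⟩ := Submodule.mem_span_singleton.mp hv
  rw [map_smul, LinearMap.smul_apply, smul_eq_mul, mul_div_cancel_right₀ _ hw]

section ElectromagneticGeodesic

variable {g : LinearMap.BilinForm ℝ V} {κ T : ℝ}
  {Y Y' R : ℝ → (V →L[ℝ] V)} {P : ℝ → (V →ₗ[ℝ] (V →L[ℝ] V))} {c : ℝ → V}

theorem bilin_apply_self_eq_of_hasDerivWithinAt_skew [FiniteDimensional ℝ V]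
    (hgsymm : ∀ u v, g u v = g v u)
    (hYanti : ∀ t ∈ Icc (0:ℝ) T, ∀ u v, g (Y t u) v = -g u (Y t v))
    (hc : ∀ t ∈ Icc (0:ℝ) T, HasDerivWithinAt c (Y t (c t)) (Icc 0 T) t)
    {t : ℝ} (ht : t ∈ Icc 0 T) : g (c t) (c t) = g (c 0) (c 0) := by
  have h0 : (0:ℝ) ∈ Icc 0 T := ⟨le_rfl, ht.1.trans ht.2⟩
  have hderiv : ∀ t ∈ Icc (0:ℝ) T,
      HasDerivWithinAt (fun t => g (c t) (c t)) 0 (Icc 0 T) t := fun t ht => by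
    convert g.hasDerivWithinAt_apply (hc t ht) (hc t ht) using 1
    rw [hgsymm (c t), g.apply_self_eq_zero_of_skew hgsymm (hYanti t ht), add_zero]
  simpa using (convex_Icc 0 T).eq_add_smul_of_hasDerivWithinAt hderiv h0 ht

theorem bilin_deriv_apply_self_eq_zero [FiniteDimensional ℝ V]
    (hT : 0 < T) (hgsymm : ∀ u v, g u v = g v u)
    (hY : ∀ t ∈ Icc (0:ℝ) T, HasDerivWithinAt Y (Y' t) (Icc 0 T) t)
    (hYanti : ∀ t ∈ Icc (0:ℝ) T, ∀ u v, g (Y t u) v = -g u (Y t v))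
    (hc : ∀ t ∈ Icc (0:ℝ) T, HasDerivWithinAt c (Y t (c t)) (Icc 0 T) t)
    {t : ℝ} (ht : t ∈ Icc 0 T) : g (Y' t (c t)) (c t) = 0 := by
  -- differentiate the identity `g (Y t (c t)) (c t) = 0`
  have hzero : HasDerivWithinAt (fun t => g (Y t (c t)) (c t)) 0 (Icc 0 T) t :=
    (hasDerivWithinAt_const t _ 0).congr
      (fun s hs => g.apply_self_eq_zero_of_skew hgsymm (hYanti s hs) _)
      (g.apply_self_eq_zero_of_skew hgsymm (hYanti t ht) _)
  have hprod := g.hasDerivWithinAt_apply ((hY t ht).clm_apply (hc t ht)) (hc t ht)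
  have h := (uniqueDiffOn_Icc hT t ht).eq_deriv _ hprod hzero
  rw [map_add, LinearMap.add_apply, hYanti t ht (Y t (c t))] at h
  linarith [hgsymm (Y t (c t)) (Y t (c t))]

theorem IsECJacobiField.congr {J₁ J₂ : ℝ → V} (hJ : IsECJacobiField T κ g Y R P c J₁)
    (h : ∀ t ∈ Icc (0:ℝ) T, J₁ t = J₂ t) : IsECJacobiField T κ g Y R P c J₂ := by
  obtain ⟨J', J'', hJ', hJ'', hJac⟩ := hJ
  exact ⟨J', J'', fun t ht => (hJ' t ht).congr (fun s hs => (h s hs).symm) (h t ht).symm,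
    hJ'', fun t ht => h t ht ▸ hJac t ht⟩

theorem isECJacobiField_affine_smul (hκ : κ ≠ 0) (hT : 0 ≤ T)
    (hgsymm : ∀ u v, g u v = g v u)
    (hY : ∀ t ∈ Icc (0:ℝ) T, HasDerivWithinAt Y (Y' t) (Icc 0 T) t)
    (hYanti : ∀ t ∈ Icc (0:ℝ) T, ∀ u v, g (Y t u) v = -g u (Y t v))
    (hc : ∀ t ∈ Icc (0:ℝ) T, HasDerivWithinAt c (Y t (c t)) (Icc 0 T) t)
    (hc0 : g (c 0) (c 0) = 2 * κ) (hR : ∀ t ∈ Icc (0:ℝ) T, R t (c t) = 0)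
    (hP : ∀ t ∈ Icc (0:ℝ) T, P t (c t) = Y' t) (a b : ℝ) :
    IsECJacobiField T κ g Y R P c (fun t => (a + b * t) • c t) := by
  have hl : ∀ t, HasDerivWithinAt (fun t : ℝ => a + b * t) b (Icc 0 T) t := fun t => by
    simpa using ((hasDerivWithinAt_id t _).const_mul b).const_add a
  refine ⟨fun t => (a + b * t) • Y t (c t) + b • c t,
    fun t => (a + b * t) • (Y' t (c t) + Y t (Y t (c t))) + b • Y t (c t) + b • Y t (c t),
    fun t ht => (hl t).smul (hc t ht),
    fun t ht => ((hl t).smul ((hY t ht).clm_apply (hc t ht))).add ((hc t ht).const_smul b),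
    fun t ht => ?_⟩
  have hcoef : 1 / (2 * κ) * g ((a + b * 0) • Y 0 (c 0) + b • c 0) (c 0) = b := by
    rw [map_add, map_smul, map_smul, LinearMap.add_apply, LinearMap.smul_apply,
      LinearMap.smul_apply, g.apply_self_eq_zero_of_skew hgsymm (hYanti 0 ⟨le_rfl, hT⟩), hc0]
    field_simp
    ring
  dsimp only
  rw [hcoef]
  simp only [map_smul, hR t ht, hP t ht, map_add, smul_zero, FunLike.coe_smul,
    Pi.smul_apply]
  module

theorem IsECJacobiField.exists_affine_of_mem_span [FiniteDimensional ℝ V]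
    (hκ : κ ≠ 0) (hT : 0 < T)
    (hgsymm : ∀ u v, g u v = g v u)
    (hY : ∀ t ∈ Icc (0:ℝ) T, HasDerivWithinAt Y (Y' t) (Icc 0 T) t)
    (hYanti : ∀ t ∈ Icc (0:ℝ) T, ∀ u v, g (Y t u) v = -g u (Y t v))
    (hc : ∀ t ∈ Icc (0:ℝ) T, HasDerivWithinAt c (Y t (c t)) (Icc 0 T) t)
    (hc0 : g (c 0) (c 0) = 2 * κ) (hR : ∀ t ∈ Icc (0:ℝ) T, R t (c t) = 0)
    (hP : ∀ t ∈ Icc (0:ℝ) T, P t (c t) = Y' t) {J : ℝ → V}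
    (hJ : IsECJacobiField T κ g Y R P c J)
    (hspan : ∀ t ∈ Icc (0:ℝ) T, J t ∈ Submodule.span ℝ {c t}) :
    ∃ a b : ℝ, ∀ t ∈ Icc (0:ℝ) T, J t = (a + b * t) • c t := by
  obtain ⟨J', J'', hJ', hJ'', hJac⟩ := hJ
  have h0 : (0:ℝ) ∈ Icc 0 T := ⟨le_rfl, hT.le⟩
  have hskew : ∀ t ∈ Icc (0:ℝ) T, g (c t) (Y t (c t)) = 0 := fun t ht => by
    rw [hgsymm, g.apply_self_eq_zero_of_skew hgsymm (hYanti t ht)]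
  have hcc : ∀ t ∈ Icc (0:ℝ) T, g (c t) (c t) = 2 * κ := fun t ht =>
    (bilin_apply_self_eq_of_hasDerivWithinAt_skew hgsymm hYanti hc ht).trans hc0
  have hJc : ∀ t ∈ Icc (0:ℝ) T, J t = (g (J t) (c t) / (2 * κ)) • c t := fun t ht => by
    rw [← hcc t ht]
    exact g.eq_smul_of_mem_span_singleton (hcc t ht ▸ mul_ne_zero two_ne_zero hκ) (hspan t ht)
  have hψ : ∀ t ∈ Icc (0:ℝ) T,
      HasDerivWithinAt (fun t => g (J' t) (c t)) 0 (Icc 0 T) t := fun t ht => by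
    convert g.hasDerivWithinAt_apply (hJ'' t ht) (hc t ht) using 1
    have h := congrArg (fun v => g v (c t)) (hJac t ht)
    rw [hJc t ht] at h
    simp only [map_sub, map_add, map_smul, hR t ht, hP t ht, smul_zero, map_zero,
      LinearMap.sub_apply, LinearMap.add_apply, LinearMap.smul_apply, LinearMap.zero_apply,
      FunLike.coe_smul, Pi.smul_apply, smul_eq_mul, hYanti t ht (J' t),
      bilin_deriv_apply_self_eq_zero hT hgsymm hY hYanti hc ht,
      g.apply_self_eq_zero_of_skew hgsymm (hYanti t ht)] at h
    linarith
  have hφ : ∀ t ∈ Icc (0:ℝ) T,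
      HasDerivWithinAt (fun t => g (J t) (c t)) (g (J' 0) (c 0)) (Icc 0 T) t := fun t ht => by
    convert g.hasDerivWithinAt_apply (hJ' t ht) (hc t ht) using 1
    rw [hJc t ht, map_smul, LinearMap.smul_apply, hskew t ht, smul_zero, zero_add]
    simpa using ((convex_Icc 0 T).eq_add_smul_of_hasDerivWithinAt hψ h0 ht).symm
  refine ⟨g (J 0) (c 0) / (2 * κ), g (J' 0) (c 0) / (2 * κ), fun t ht => ?_⟩
  rw [hJc t ht, (convex_Icc 0 T).eq_add_smul_of_hasDerivWithinAt hφ h0 ht, sub_zero,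
    smul_eq_mul]
  congr 1
  ring

end ElectromagneticGeodesic

theorem ecJacobiField_tangent_iff_general
    [FiniteDimensional ℝ V]
    (g : LinearMap.BilinForm ℝ V) (hgsymm : ∀ u v : V, g u v = g v u)
    (κ : ℝ) (hκ : κ ≠ 0) (T : ℝ) (hT : 0 < T)
    (Y Y' : ℝ → (V →L[ℝ] V))
    (hY : ∀ t ∈ Set.Icc (0:ℝ) T, HasDerivWithinAt Y (Y' t) (Set.Icc 0 T) t)
    (hYanti : ∀ t ∈ Set.Icc (0:ℝ) T, ∀ u v : V, g (Y t u) v = - g u (Y t v))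
    (c : ℝ → V)
    (hc : ∀ t ∈ Set.Icc (0:ℝ) T, HasDerivWithinAt c (Y t (c t)) (Set.Icc 0 T) t)
    (hc0 : g (c 0) (c 0) = 2 * κ)
    (R : ℝ → (V →L[ℝ] V)) (hR : ∀ t ∈ Set.Icc (0:ℝ) T, R t (c t) = 0)
    (P : ℝ → (V →ₗ[ℝ] (V →L[ℝ] V)))
    (hP : ∀ t ∈ Set.Icc (0:ℝ) T, P t (c t) = Y' t)
    (J : ℝ → V) :
    (IsECJacobiField T κ g Y R P c J ∧
        ∀ t ∈ Set.Icc (0:ℝ) T, J t ∈ Submodule.span ℝ {c t})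
      ↔ ∃ a b : ℝ, ∀ t ∈ Set.Icc (0:ℝ) T, J t = (a + b * t) • c t := by
  constructor
  · rintro ⟨hJ, hspan⟩
    exact hJ.exists_affine_of_mem_span hκ hT hgsymm hY hYanti hc hc0 hR hP hspan
  · rintro ⟨a, b, hJ⟩
    refine ⟨(isECJacobiField_affine_smul hκ hT.le hgsymm hY hYanti hc hc0 hR hP a b).congr
      fun t ht => (hJ t ht).symm, fun t ht => ?_⟩
    rw [hJ t ht]
    exact Submodule.smul_mem _ _ (Submodule.mem_span_singleton_self _)

/-- **Example `examplejacobi` (in a parallel frame).** The energy-constrained Jacobi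
fields everywhere tangent to the geodesic (i.e. with `J t ∈ span {c t}` for all `t`)
are exactly the fields `J t = (a + b·t) • c t` with `a, b ∈ ℝ`. -/
theorem ecJacobiField_tangent_iff
    [FiniteDimensional ℝ V]
    (g : LinearMap.BilinForm ℝ V) (hgsymm : ∀ u v : V, g u v = g v u)
    (hgnd : ∀ u : V, (∀ v : V, g u v = 0) → u = 0)
    (κ : ℝ) (hκ : κ ≠ 0) (T : ℝ) (hT : 0 < T)
    (Y Y' : ℝ → (V →L[ℝ] V))
    (hY : ∀ t ∈ Set.Icc (0:ℝ) T, HasDerivWithinAt Y (Y' t) (Set.Icc 0 T) t)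
    (hY'cont : ContinuousOn Y' (Set.Icc 0 T))
    (hYanti : ∀ t ∈ Set.Icc (0:ℝ) T, ∀ u v : V, g (Y t u) v = - g u (Y t v))
    (c : ℝ → V)
    (hc : ∀ t ∈ Set.Icc (0:ℝ) T, HasDerivWithinAt c (Y t (c t)) (Set.Icc 0 T) t)
    (hc0 : g (c 0) (c 0) = 2 * κ)
    (R : ℝ → (V →L[ℝ] V)) (hR : ∀ t ∈ Set.Icc (0:ℝ) T, R t (c t) = 0)
    (P : ℝ → (V →ₗ[ℝ] (V →L[ℝ] V)))
    (hP : ∀ t ∈ Set.Icc (0:ℝ) T, P t (c t) = Y' t)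
    (J : ℝ → V) :
    (IsECJacobiField T κ g Y R P c J ∧
        ∀ t ∈ Set.Icc (0:ℝ) T, J t ∈ Submodule.span ℝ {c t})
      ↔ ∃ a b : ℝ, ∀ t ∈ Set.Icc (0:ℝ) T, J t = (a + b * t) • c t :=
  ecJacobiField_tangent_iff_general g hgsymm κ hκ T hT Y Y' hY hYanti c hc hc0 R hR P hP J
end

section
/- Let V be a finite-dimensional real normed vector space, g a nondegenerate symmetric bilinear form on V, κ ≠ 0 a real number, and T > 0. Let Y : [0,T] → End(V) be continuously differentiable with Y(t) g-antisymmetric for every t; let c : [0,T] → V be differentiable with c'(t) = Y(t)(c(t)) for all t and g(c(0), c(0)) = 2κ; let R : [0,T] → End(V) with R(t)(c(t)) = 0 for all t; and let P : [0,T] → Hom(V, End(V)) with P(t)(c(t)) = Y'(t) for all t. Call a twice differentiable J : [0,T] → V an energy-constrained Jacobi field if J''(t) + R(t)(J(t)) − P(t)(J(t))(c(t)) − Y(t)(J'(t)) − (1/(2κ))·g(J'(0), c(0))·Y(t)(c(t)) = 0 for all t ∈ [0,T]. Let t₀ ∈ (0,T] and let J be an energy-constrained Jacobi field with J(0) ∈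 span{c(0)} and J(t₀) ∈ span{c(t₀)}. Then there exists a unique energy-constrained Jacobi field J' such that J'(0) = 0, J'(t₀) = 0, and J(t) − J'(t) ∈ span{c(t)} for every t ∈ [0,T]. -/
variable {V : Type*} [NormedAddCommGroup V] [NormedSpace ℝ V]

private lemma aux_const_of_deriv_zero {T : ℝ} (hT : 0 < T) {φ : ℝ → ℝ}
    (h : ∀ t ∈ Set.Icc (0:ℝ) T, HasDerivWithinAt φ 0 (Set.Icc 0 T) t) :
    ∀ t ∈ Set.Icc (0:ℝ) T, φ t = φ 0 := by
  have hdiff : DifferentiableOn ℝ φ (Set.Icc 0 T) :=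
    fun x hx => (h x hx).differentiableWithinAt
  have hderiv : ∀ x ∈ Set.Ico (0:ℝ) T, derivWithin φ (Set.Icc 0 T) x = 0 := by
    intro x hx
    exact (h x (Set.Ico_subset_Icc_self hx)).derivWithin
      ((uniqueDiffOn_Icc hT) x (Set.Ico_subset_Icc_self hx))
  exact constant_of_derivWithin_zero hdiff hderiv

private lemma aux_bilin_deriv [FiniteDimensional ℝ V] (g : LinearMap.BilinForm ℝ V)
    {s : Set ℝ} {x : ℝ} {u w : ℝ → V} {u' w' : V}
    (hu : HasDerivWithinAt u u' s x) (hw : HasDerivWithinAt w w' s x) :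
    HasDerivWithinAt (fun t => g (u t) (w t)) (g u' (w x) + g (u x) w') s x := by
  let e : (V →ₗ[ℝ] ℝ) ≃ₗ[ℝ] (V →L[ℝ] ℝ) := LinearMap.toContinuousLinearMap
  let G : V →L[ℝ] (V →L[ℝ] ℝ) := LinearMap.toContinuousLinearMap (e.toLinearMap ∘ₗ g)
  have hGapp : ∀ a b : V, G a b = g a b := fun a b => by
    simp [G, e]
  have h1 : HasDerivWithinAt (fun t => G (u t)) (G u') s x :=
    (G.hasFDerivAt (x := u x)).comp_hasDerivWithinAt x hu
  have h2 := h1.clm_apply hw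
  simp only [hGapp] at h2
  exact h2

/-- **Key claim in the proof of Lemma `lemmapsi` (in a parallel frame).** If an
energy-constrained Jacobi field `J` is tangent to the geodesic at `t = 0` and at
`t = t₀ ∈ (0,T]`, then there is a unique energy-constrained Jacobi field `K` vanishing
at `t = 0` and `t = t₀` such that `J − K` is everywhere tangent to the geodesic. -/
theorem exists_unique_ecJacobiField_vanishing
    [FiniteDimensional ℝ V]
    (g : LinearMap.BilinForm ℝ V) (hgsymm : ∀ u v : V, g u v = g v u)
    (hgnd : ∀ u : V, (∀ v : V, g u v = 0) → u = 0)
    (κ : ℝ) (hκ : κ ≠ 0) (T : ℝ) (hT : 0 < T)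
    (Y Y' : ℝ → (V →L[ℝ] V))
    (hY : ∀ t ∈ Set.Icc (0:ℝ) T, HasDerivWithinAt Y (Y' t) (Set.Icc 0 T) t)
    (hY'cont : ContinuousOn Y' (Set.Icc 0 T))
    (hYanti : ∀ t ∈ Set.Icc (0:ℝ) T, ∀ u v : V, g (Y t u) v = - g u (Y t v))
    (c : ℝ → V)
    (hc : ∀ t ∈ Set.Icc (0:ℝ) T, HasDerivWithinAt c (Y t (c t)) (Set.Icc 0 T) t)
    (hc0 : g (c 0) (c 0) = 2 * κ)
    (R : ℝ → (V →L[ℝ] V)) (hR : ∀ t ∈ Set.Icc (0:ℝ) T, R t (c t) = 0)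
    (P : ℝ → (V →ₗ[ℝ] (V →L[ℝ] V)))
    (hP : ∀ t ∈ Set.Icc (0:ℝ) T, P t (c t) = Y' t)
    (t₀ : ℝ) (ht₀0 : 0 < t₀) (ht₀T : t₀ ≤ T)
    (J : ℝ → V) (hJ : IsECJacobiField T κ g Y R P c J)
    (hJ0 : J 0 ∈ Submodule.span ℝ {c 0})
    (hJt₀ : J t₀ ∈ Submodule.span ℝ {c t₀}) :
    ∃ K : ℝ → V,
      (IsECJacobiField T κ g Y R P c K ∧ K 0 = 0 ∧ K t₀ = 0 ∧
        ∀ t ∈ Set.Icc (0:ℝ) T, J t - K t ∈ Submodule.span ℝ {c t}) ∧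
      ∀ K₂ : ℝ → V,
        (IsECJacobiField T κ g Y R P c K₂ ∧ K₂ 0 = 0 ∧ K₂ t₀ = 0 ∧
          ∀ t ∈ Set.Icc (0:ℝ) T, J t - K₂ t ∈ Submodule.span ℝ {c t}) →
        ∀ t ∈ Set.Icc (0:ℝ) T, K₂ t = K t := by
  have h0I : (0:ℝ) ∈ Set.Icc (0:ℝ) T := ⟨le_refl _, hT.le⟩
  have ht₀I : t₀ ∈ Set.Icc (0:ℝ) T := ⟨ht₀0.le, ht₀T⟩
  -- pointwise antisymmetry consequences
  have hgYcc : ∀ t ∈ Set.Icc (0:ℝ) T, g (Y t (c t)) (c t) = 0 := by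
    intro t ht
    have h1 := hYanti t ht (c t) (c t)
    have h2 := hgsymm (c t) (Y t (c t))
    linarith [h1, h2]
  have hgcYc : ∀ t ∈ Set.Icc (0:ℝ) T, g (c t) (Y t (c t)) = 0 := by
    intro t ht
    rw [hgsymm]; exact hgYcc t ht
  -- g (c t) (c t) is constant = 2κ
  have hcc : ∀ t ∈ Set.Icc (0:ℝ) T, g (c t) (c t) = 2 * κ := by
    have hder : ∀ t ∈ Set.Icc (0:ℝ) T,
        HasDerivWithinAt (fun t => g (c t) (c t)) 0 (Set.Icc 0 T) t := by
      intro t ht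
      have h1 := aux_bilin_deriv g (hc t ht) (hc t ht)
      have hz : g (Y t (c t)) (c t) + g (c t) (Y t (c t)) = 0 := by
        rw [hgYcc t ht, hgcYc t ht]; ring
      rwa [hz] at h1
    intro t ht
    rw [aux_const_of_deriv_zero hT hder t ht]; exact hc0
  -- Y' is also antisymmetric
  have hY'anti : ∀ t ∈ Set.Icc (0:ℝ) T, ∀ u v : V, g (Y' t u) v = - g u (Y' t v) := by
    intro t ht u v
    have hu : HasDerivWithinAt (fun t => Y t u) (Y' t u) (Set.Icc 0 T) t := by
      simpa using (hY t ht).clm_apply (hasDerivWithinAt_const t _ u)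
    have hv : HasDerivWithinAt (fun t => Y t v) (Y' t v) (Set.Icc 0 T) t := by
      simpa using (hY t ht).clm_apply (hasDerivWithinAt_const t _ v)
    have hF : HasDerivWithinAt (fun t => g (Y t u) v) (g (Y' t u) v) (Set.Icc 0 T) t := by
      simpa using aux_bilin_deriv g hu (hasDerivWithinAt_const t _ v)
    have hG : HasDerivWithinAt (fun t => -(g u (Y t v))) (-(g u (Y' t v))) (Set.Icc 0 T) t := by
      have := aux_bilin_deriv g (hasDerivWithinAt_const t _ u) hv
      have h' : HasDerivWithinAt (fun t => g u (Y t v)) (g u (Y' t v)) (Set.Icc 0 T) t := by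
        simpa using this
      exact h'.neg
    have hF' : HasDerivWithinAt (fun t => g (Y t u) v) (-(g u (Y' t v))) (Set.Icc 0 T) t :=
      hG.congr (fun y hy => hYanti y hy u v) (hYanti t ht u v)
    have hud := (uniqueDiffOn_Icc hT) t ht
    have := (hF.derivWithin hud).symm.trans (hF'.derivWithin hud)
    linarith [this]
  have hgY'cc : ∀ t ∈ Set.Icc (0:ℝ) T, g (Y' t (c t)) (c t) = 0 := by
    intro t ht
    have h1 := hY'anti t ht (c t) (c t)
    have h2 := hgsymm (c t) (Y' t (c t))
    linarith [h1, h2]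
  obtain ⟨J1, J2, hJd1, hJd2, hJeq⟩ := hJ
  obtain ⟨α, hα⟩ := Submodule.mem_span_singleton.mp hJ0
  obtain ⟨β, hβ⟩ := Submodule.mem_span_singleton.mp hJt₀
  set b : ℝ := (β - α) / t₀ with hb
  set sc : ℝ → ℝ := fun t => α + b * t with hsc
  set K : ℝ → V := fun t => J t - sc t • c t with hK
  set K1 : ℝ → V := fun t => J1 t - b • c t - sc t • Y t (c t) with hK1
  set K2v : ℝ → V := fun t => J2 t - (2*b) • Y t (c t)
      - sc t • (Y' t (c t) + Y t (Y t (c t))) with hK2v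
  have hscd : ∀ t : ℝ, HasDerivWithinAt sc b (Set.Icc 0 T) t := by
    intro t
    have : HasDerivAt sc b t := by
      exact (((hasDerivAt_id t).const_mul b).const_add α).congr_deriv (mul_one b)
    exact this.hasDerivWithinAt
  have hYc : ∀ t ∈ Set.Icc (0:ℝ) T, HasDerivWithinAt (fun t => Y t (c t))
      (Y' t (c t) + Y t (Y t (c t))) (Set.Icc 0 T) t := fun t ht =>
    (hY t ht).clm_apply (hc t ht)
  have hKd1 : ∀ t ∈ Set.Icc (0:ℝ) T, HasDerivWithinAt K (K1 t) (Set.Icc 0 T) t := by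
    intro t ht
    have h2 := (hJd1 t ht).sub ((hscd t).smul (hc t ht))
    have hval : J1 t - (sc t • Y t (c t) + b • c t) = K1 t := by
      rw [hK1]; module
    rwa [hval] at h2
  have hKd2 : ∀ t ∈ Set.Icc (0:ℝ) T, HasDerivWithinAt K1 (K2v t) (Set.Icc 0 T) t := by
    intro t ht
    have h2 := ((hJd2 t ht).sub ((hc t ht).const_smul b)).sub ((hscd t).smul (hYc t ht))
    have hval : J2 t - b • Y t (c t) - (sc t • (Y' t (c t) + Y t (Y t (c t)))
        + b • Y t (c t)) = K2v t := by
      rw [hK2v]; module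
    rwa [hval] at h2
  -- scalar for K1 0
  have hsc0 : sc 0 = α := by simp [hsc]
  have hK10 : (1 / (2 * κ)) * g (K1 0) (c 0) = (1 / (2 * κ)) * g (J1 0) (c 0) - b := by
    have h1 : g (K1 0) (c 0) = g (J1 0) (c 0) - b * (g (c 0) (c 0)) - sc 0 * g (Y 0 (c 0)) (c 0) := by
      rw [hK1]; simp [map_sub, map_smul, LinearMap.sub_apply, LinearMap.smul_apply,
        smul_eq_mul]
    rw [h1, hc0, hgYcc 0 h0I]
    field_simp
    ring
  have hKeq : ∀ t ∈ Set.Icc (0:ℝ) T,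
      K2v t + R t (K t) - P t (K t) (c t) - Y t (K1 t)
        - ((1 / (2 * κ)) * g (K1 0) (c 0)) • Y t (c t) = 0 := by
    intro t ht
    have key : K2v t + R t (K t) - P t (K t) (c t) - Y t (K1 t)
        - ((1 / (2 * κ)) * g (K1 0) (c 0)) • Y t (c t)
        = J2 t + R t (J t) - P t (J t) (c t) - Y t (J1 t)
          - ((1 / (2 * κ)) * g (J1 0) (c 0)) • Y t (c t) := by
      rw [hK10, hK2v, hK, hK1]
      simp only [map_sub, map_smul, ContinuousLinearMap.map_sub, ContinuousLinearMap.map_smul,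
        LinearMap.sub_apply, LinearMap.smul_apply, ContinuousLinearMap.sub_apply,
        ContinuousLinearMap.smul_apply, hR t ht, hP t ht]
      module
    rw [key]; exact hJeq t ht
  have hK0 : K 0 = 0 := by
    show J 0 - (α + b * 0) • c 0 = 0
    rw [show α + b * 0 = α by ring, hα, sub_self]
  have hKt₀ : K t₀ = 0 := by
    show J t₀ - (α + b * t₀) • c t₀ = 0
    rw [show α + b * t₀ = β by rw [hb]; field_simp; ring, hβ, sub_self]
  have hJK : ∀ s : ℝ, J s - K s = sc s • c s := by
    intro s
    show J s - (J s - sc s • c s) = sc s • c s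
    rw [sub_sub_cancel]
  refine ⟨K, ⟨⟨K1, K2v, hKd1, hKd2, hKeq⟩, hK0, hKt₀, ?_⟩, ?_⟩
  · intro t ht
    rw [hJK t]
    exact Submodule.smul_mem _ _ (Submodule.mem_span_singleton_self _)
  -- uniqueness
  intro K₂ ⟨hK₂jac, hK₂0, hK₂t₀, hK₂span⟩ t ht
  obtain ⟨L1, L2, hLd1, hLd2, hLeq⟩ := hK₂jac
  set D : ℝ → V := fun t => K₂ t - K t with hD
  set D1 : ℝ → V := fun t => L1 t - K1 t with hD1
  set D2 : ℝ → V := fun t => L2 t - K2v t with hD2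
  have hDspan : ∀ s ∈ Set.Icc (0:ℝ) T, D s ∈ Submodule.span ℝ {c s} := by
    intro s hs
    have h0 : D s = (J s - K s) - (J s - K₂ s) := by show K₂ s - K s = _; abel
    rw [h0, hJK s]
    exact Submodule.sub_mem _
      (Submodule.smul_mem _ _ (Submodule.mem_span_singleton_self _)) (hK₂span s hs)
  have hD0 : D 0 = 0 := by show K₂ 0 - K 0 = 0; rw [hK₂0, hK0, sub_self]
  have hDt₀ : D t₀ = 0 := by show K₂ t₀ - K t₀ = 0; rw [hK₂t₀, hKt₀, sub_self]
  have hDd1 : ∀ s ∈ Set.Icc (0:ℝ) T, HasDerivWithinAt D (D1 s) (Set.Icc 0 T) s :=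
    fun s hs => (hLd1 s hs).sub (hKd1 s hs)
  have hDd2 : ∀ s ∈ Set.Icc (0:ℝ) T, HasDerivWithinAt D1 (D2 s) (Set.Icc 0 T) s :=
    fun s hs => (hLd2 s hs).sub (hKd2 s hs)
  have hγD : (1 / (2 * κ)) * g (D1 0) (c 0)
      = (1 / (2 * κ)) * g (L1 0) (c 0) - (1 / (2 * κ)) * g (K1 0) (c 0) := by
    rw [hD1]; simp only [map_sub, LinearMap.sub_apply]; ring
  have hDeq : ∀ s ∈ Set.Icc (0:ℝ) T,
      D2 s + R s (D s) - P s (D s) (c s) - Y s (D1 s)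
        - ((1 / (2 * κ)) * g (D1 0) (c 0)) • Y s (c s) = 0 := by
    intro s hs
    have key : D2 s + R s (D s) - P s (D s) (c s) - Y s (D1 s)
        - ((1 / (2 * κ)) * g (D1 0) (c 0)) • Y s (c s)
        = (L2 s + R s (K₂ s) - P s (K₂ s) (c s) - Y s (L1 s)
            - ((1 / (2 * κ)) * g (L1 0) (c 0)) • Y s (c s))
          - (K2v s + R s (K s) - P s (K s) (c s) - Y s (K1 s)
            - ((1 / (2 * κ)) * g (K1 0) (c 0)) • Y s (c s)) := by
      rw [hγD, hD2, hD, hD1]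
      simp only [map_sub, ContinuousLinearMap.map_sub, LinearMap.sub_apply,
        ContinuousLinearMap.sub_apply]
      module
    rw [key, hLeq s hs, hKeq s hs]; simp
  -- the tangential function h s = g (D s) (c s)
  set hf : ℝ → ℝ := fun s => g (D s) (c s) with hhf
  set h1f : ℝ → ℝ := fun s => g (D1 s) (c s) with hh1f
  have hDYc : ∀ s ∈ Set.Icc (0:ℝ) T, g (D s) (Y s (c s)) = 0 := by
    intro s hs
    obtain ⟨f, hfD⟩ := Submodule.mem_span_singleton.mp (hDspan s hs)
    rw [← hfD, map_smul, LinearMap.smul_apply, smul_eq_mul, hgcYc s hs, mul_zero]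
  have hhd : ∀ s ∈ Set.Icc (0:ℝ) T, HasDerivWithinAt hf (h1f s) (Set.Icc 0 T) s := by
    intro s hs
    have h1 := aux_bilin_deriv g (hDd1 s hs) (hc s hs)
    have hz : g (D1 s) (c s) + g (D s) (Y s (c s)) = h1f s := by
      rw [hDYc s hs, hh1f]; ring
    rwa [hz] at h1
  have hh1d : ∀ s ∈ Set.Icc (0:ℝ) T, HasDerivWithinAt h1f 0 (Set.Icc 0 T) s := by
    intro s hs
    have h1 := aux_bilin_deriv g (hDd2 s hs) (hc s hs)
    -- compute g (D2 s) (c s) + g (D1 s) (Y s (c s)) = 0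
    obtain ⟨f, hfD⟩ := Submodule.mem_span_singleton.mp (hDspan s hs)
    have e1 : g (R s (D s)) (c s) = 0 := by
      rw [← hfD, ContinuousLinearMap.map_smul, hR s hs]; simp
    have e2 : g (P s (D s) (c s)) (c s) = 0 := by
      rw [← hfD, map_smul, ContinuousLinearMap.smul_apply, map_smul, LinearMap.smul_apply,
        hP s hs, smul_eq_mul, hgY'cc s hs, mul_zero]
    have e3 : g (Y s (D1 s)) (c s) = - g (D1 s) (Y s (c s)) := hYanti s hs (D1 s) (c s)
    have e4 := congrArg (fun v => g v (c s)) (hDeq s hs)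
    simp only [map_add, map_sub, map_smul, LinearMap.add_apply, LinearMap.sub_apply,
      LinearMap.smul_apply, LinearMap.zero_apply, map_zero, smul_eq_mul] at e4
    rw [e1, e2, e3, hgYcc s hs] at e4
    have hz : g (D2 s) (c s) + g (D1 s) (Y s (c s)) = 0 := by linarith
    rwa [hz] at h1
  have hh1const : ∀ s ∈ Set.Icc (0:ℝ) T, h1f s = h1f 0 := aux_const_of_deriv_zero hT hh1d
  -- hf s = h1f 0 * s
  have hflin : ∀ s ∈ Set.Icc (0:ℝ) T, hf s = h1f 0 * s := by
    have hψ : ∀ s ∈ Set.Icc (0:ℝ) T,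
        HasDerivWithinAt (fun s => hf s - h1f 0 * s) 0 (Set.Icc 0 T) s := by
      intro s hs
      have hlin : HasDerivWithinAt (fun s : ℝ => h1f 0 * s) (h1f 0) (Set.Icc 0 T) s := by
        simpa using (((hasDerivAt_id s).const_mul (h1f 0)).hasDerivWithinAt :
          HasDerivWithinAt (fun s : ℝ => h1f 0 * s) (h1f 0 * 1) (Set.Icc 0 T) s)
      have h2 := (hhd s hs).sub hlin
      have hz : h1f s - h1f 0 = 0 := by rw [hh1const s hs]; ring
      rwa [hz] at h2
    intro s hs
    have := aux_const_of_deriv_zero hT hψ s hs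
    have hf0 : hf 0 = 0 := by show g (D 0) (c 0) = 0; rw [hD0]; simp
    simp only [hf0, mul_zero, sub_zero] at this
    linarith [this]
  have hh1f0 : h1f 0 = 0 := by
    have h1 : hf t₀ = 0 := by show g (D t₀) (c t₀) = 0; rw [hDt₀]; simp
    have h2 := hflin t₀ ht₀I
    rw [h1] at h2
    have := mul_eq_zero.mp h2.symm
    rcases this with h | h
    · exact h
    · exact absurd h ht₀0.ne'
  have hfzero : ∀ s ∈ Set.Icc (0:ℝ) T, hf s = 0 := by
    intro s hs; rw [hflin s hs, hh1f0, zero_mul]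
  -- conclude D t = 0
  obtain ⟨f, hfD⟩ := Submodule.mem_span_singleton.mp (hDspan t ht)
  have h1 : f * (2 * κ) = 0 := by
    have h2 : g (D t) (c t) = 0 := hfzero t ht
    rw [← hfD, map_smul, LinearMap.smul_apply, smul_eq_mul, hcc t ht] at h2
    exact h2
  have hf0 : f = 0 := by
    rcases mul_eq_zero.mp h1 with h | h
    · exact h
    · exfalso; apply hκ; linarith
  have : D t = 0 := by rw [← hfD, hf0, zero_smul]
  have := sub_eq_zero.mp this
  exact this
end

section
/- Let V be a real vector space, g a nondegenerate symmetric bilinear form on V, κ ≠ 0 a real number, w ∈ V with g(w,w) = 2κ, and Y : V → V a g-antisymmetric linear map. Define 𝔤(u,v) = g(u,v) − (1/(2κ))·g(w,u)·g(w,v) and the antisymmetric bilinear form ω̂ on V × V by ω̂((u₁,v₁),(u₂,v₂)) = 𝔤(v₁,u₂) − 𝔤(u₁,v₂) + g(u₁, Y(u₂)). Then the kernel of ω̂, namely { z ∈ V × V : ω̂(z, z') = 0 for all z' ∈ V × V }, is exactly the two-dimensional subspace spanned by (0, w) and (w, Y(w)). -/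
/-!
Pairing with `(0, v)` and `(u, 0)` shows that `z` lies in the kernel of `ω̂` iff `z.1` lies in the
radical of `𝔤` and `g(z.2 - Y z.1, ·)` is a multiple of `g(w, ·)`; nondegeneracy of `g` turns both
into `z.1, z.2 - Y z.1 ∈ ℝ w`. Conversely `g(w,w) = 2κ` puts `w` in the radical of `𝔤`, and
`g(w, Y w) = 0` makes `(w, Y w)` pair to zero with everything. The two generators are independent
because `w ≠ 0`.
-/

open LinearMap (BilinForm)

section

variable {K M : Type*} [Field K] [AddCommGroup M] [Module K M]

theorem finrank_span_pair {x y : M} (h : LinearIndependent K ![x, y]) :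
    Module.finrank K (Submodule.span K {x, y}) = 2 := by
  rw [← Matrix.range_cons_cons_empty x y ![], finrank_span_eq_card h, Fintype.card_fin]

theorem linearIndependent_pair_zero_prod {x : M} (hx : x ≠ 0) (y : M) :
    LinearIndependent K ![((0 : M), x), (x, y)] := by
  rw [LinearIndependent.pair_iff' (by simpa using hx)]
  intro a h
  exact hx (by simpa using (congr_arg Prod.fst h).symm)

end

section

variable {V : Type*} [AddCommGroup V] [Module ℝ V] {g : BilinForm ℝ V}

theorem apply_map_self_eq_zero_of_antisymm (hgsymm : ∀ u v : V, g u v = g v u) {Y : V →ₗ[ℝ] V}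
    (hY : ∀ u v : V, g (Y u) v = - g u (Y v)) (u : V) : g u (Y u) = 0 := by
  linarith [hY u u, hgsymm (Y u) u]

theorem eq_smul_of_forall_apply_eq_mul (hg : g.SeparatingLeft) {u w : V} {c : ℝ}
    (h : ∀ v, g u v = c * g w v) : u = c • w := by
  rw [← sub_eq_zero]
  exact hg _ fun v ↦ by simp [h]

variable (g) (κ : ℝ) (w : V) (Y : V →ₗ[ℝ] V)

noncomputable def reducedForm : BilinForm ℝ V :=
  g - (1 / (2 * κ)) • (g w).smulRight (g w)

@[simp]
theorem reducedForm_apply (u v : V) :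
    reducedForm g κ w u v = g u v - (1 / (2 * κ)) * (g w u * g w v) := by
  simp [reducedForm]

noncomputable def presymplecticForm : BilinForm ℝ (V × V) :=
  (reducedForm g κ w).compl₁₂ (LinearMap.snd ℝ V V) (LinearMap.fst ℝ V V)
    - (reducedForm g κ w).compl₁₂ (LinearMap.fst ℝ V V) (LinearMap.snd ℝ V V)
    + (g.compl₂ Y).compl₁₂ (LinearMap.fst ℝ V V) (LinearMap.fst ℝ V V)

@[simp]
theorem presymplecticForm_apply (z z' : V × V) :
    presymplecticForm g κ w Y z z' =
      reducedForm g κ w z.2 z'.1 - reducedForm g κ w z.1 z'.2 + g z.1 (Y z'.1) := by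
  simp [presymplecticForm]

variable {g κ w Y}

theorem reducedForm_self_left (hκ : κ ≠ 0) (hw : g w w = 2 * κ) (v : V) :
    reducedForm g κ w w v = 0 := by
  rw [reducedForm_apply, hw]
  field_simp
  ring

theorem ker_presymplecticForm_le_span (hgnd : g.SeparatingLeft)
    (hY : ∀ u v : V, g (Y u) v = - g u (Y v)) :
    LinearMap.ker (presymplecticForm g κ w Y) ≤ Submodule.span ℝ {((0 : V), w), (w, Y w)} := by
  intro z hz
  have hz₁ : z.1 = (1 / (2 * κ) * g w z.1) • w := by
    refine eq_smul_of_forall_apply_eq_mul hgnd fun v ↦ ?_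
    have := congr($hz (0, v))
    simp only [presymplecticForm_apply, reducedForm_apply, map_zero, LinearMap.zero_apply] at this
    linarith
  have hz₂ : z.2 - Y z.1 = (1 / (2 * κ) * g w z.2) • w := by
    refine eq_smul_of_forall_apply_eq_mul hgnd fun u ↦ ?_
    have := congr($hz (u, 0))
    simp only [presymplecticForm_apply, reducedForm_apply, map_zero, LinearMap.zero_apply] at this
    simp only [map_sub, LinearMap.sub_apply, hY]
    linarith
  rw [Submodule.mem_span_pair]
  refine ⟨1 / (2 * κ) * g w z.2, 1 / (2 * κ) * g w z.1, Prod.ext ?_ ?_⟩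
  · simpa using hz₁.symm
  · simp only [Prod.snd_add, Prod.smul_snd]
    rw [← map_smul, ← hz₁, ← hz₂, sub_add_cancel]

theorem span_le_ker_presymplecticForm (hgsymm : ∀ u v : V, g u v = g v u) (hκ : κ ≠ 0)
    (hw : g w w = 2 * κ) (hY : ∀ u v : V, g (Y u) v = - g u (Y v)) :
    Submodule.span ℝ {((0 : V), w), (w, Y w)} ≤ LinearMap.ker (presymplecticForm g κ w Y) := by
  rw [Submodule.span_le, Set.insert_subset_iff, Set.singleton_subset_iff]
  refine ⟨?_, ?_⟩ <;> refine LinearMap.ext fun z' ↦ ?_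
  · simp [reducedForm_self_left hκ hw]
  · simp [reducedForm_self_left hκ hw, hY, apply_map_self_eq_zero_of_antisymm hgsymm hY]

end

/-- **Lemma `lemmakernelomega`.** Let `V` be a real vector space, `g` a nondegenerate
symmetric bilinear form, `κ ≠ 0`, `w ∈ V` with `g(w,w) = 2κ`, and `Y` a `g`-antisymmetric
endomorphism. Define `𝔤(u,v) = g(u,v) − (1/(2κ))·g(w,u)·g(w,v)` and the antisymmetric
form `ω̂((u₁,v₁),(u₂,v₂)) = 𝔤(v₁,u₂) − 𝔤(u₁,v₂) + g(u₁, Y u₂)` on `V × V`. Then the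
kernel of `ω̂` is exactly the two-dimensional subspace spanned by `(0, w)` and
`(w, Y w)`. -/
theorem ker_presymplectic_eq_span
    (V : Type*) [AddCommGroup V] [Module ℝ V]
    (g : LinearMap.BilinForm ℝ V) (hgsymm : ∀ u v : V, g u v = g v u)
    (hgnd : ∀ u : V, (∀ v : V, g u v = 0) → u = 0)
    (κ : ℝ) (hκ : κ ≠ 0) (w : V) (hw : g w w = 2 * κ)
    (Y : V →ₗ[ℝ] V) (hY : ∀ u v : V, g (Y u) v = - g u (Y v)) :
    {z : V × V | ∀ z' : V × V,
        (g z.2 z'.1 - (1 / (2 * κ)) * (g w z.2 * g w z'.1))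
          - (g z.1 z'.2 - (1 / (2 * κ)) * (g w z.1 * g w z'.2))
          + g z.1 (Y z'.1) = 0}
      = (Submodule.span ℝ {((0 : V), w), (w, Y w)} : Set (V × V)) ∧
    Module.finrank ℝ (Submodule.span ℝ {((0 : V), w), (w, Y w)}) = 2 := by
  have hw₀ : w ≠ 0 := by
    rintro rfl
    exact hκ (by simpa using hw.symm)
  refine ⟨?_, finrank_span_pair (linearIndependent_pair_zero_prod hw₀ (Y w))⟩
  rw [← le_antisymm (ker_presymplecticForm_le_span hgnd hY)
    (span_le_ker_presymplecticForm hgsymm hκ hw hY)]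
  ext z
  simp [LinearMap.ext_iff]
end

section
/- Let V be a finite-dimensional real normed vector space and T > 0. Let A₁, A₂ : [0,T] → End(V) be continuous, ξ : [0,T] → V continuous, and φ : V → ℝ linear. Then there exists ε ∈ (0,T] such that for every t₀ ∈ (0,ε], the only twice continuously differentiable J : [0,t₀] → V satisfying J''(t) + A₁(t)(J(t)) + A₂(t)(J'(t)) + φ(J'(0))·ξ(t) = 0 for all t ∈ [0,t₀], together with J(0) = 0 and J(t₀) = 0, is J ≡ 0. -/
/-!
Let `N` be the maximum of `‖J'‖` on `[0, t₀]`. Then `‖J‖ ≤ N T`, and the equation bounds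
`‖J''‖ ≤ K N` with `K` depending only on the data on `[0, T]` (the nonlocal term contributes
`|φ (J' 0)| ≤ ‖φ‖ N`). Since `J` vanishes at both ends, `J'` has mean zero on `[0, t₀]`,
so `‖J' 0‖ ≤ K N t₀` and `‖J'‖ ≤ 2 K N t₀` everywhere; hence `N ≤ 2 K t₀ N`,
and `N = 0` once `2 K t₀ < 1`.
-/

open Set

theorem IsCompact.exists_pos_bound_of_continuousOn {α E : Type*} [TopologicalSpace α]
    [SeminormedAddCommGroup E] {s : Set α} {f : α → E} (hs : IsCompact s)
    (hf : ContinuousOn f s) : ∃ C > 0, ∀ x ∈ s, ‖f x‖ ≤ C :=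
  let ⟨C, hC, hbound⟩ := (hs.image_of_continuousOn hf).isBounded.exists_pos_norm_le
  ⟨C, hC, fun _ hx => hbound _ (mem_image_of_mem f hx)⟩

section TwoPointBoundary

variable {E : Type*} [NormedAddCommGroup E] [NormedSpace ℝ E] {f f' f'' : ℝ → E} {a b : ℝ}

theorem norm_deriv_le_of_eq_of_norm_deriv2_le {B : ℝ} (hab : a < b)
    (hf : ∀ t ∈ Icc a b, HasDerivWithinAt f (f' t) (Icc a b) t)
    (hf' : ∀ t ∈ Icc a b, HasDerivWithinAt f' (f'' t) (Icc a b) t)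
    (hB : ∀ t ∈ Icc a b, ‖f'' t‖ ≤ B) (hfab : f a = f b) {t : ℝ} (ht : t ∈ Icc a b) :
    ‖f' t‖ ≤ 2 * B * (b - a) := by
  have ha : a ∈ Icc a b := left_mem_Icc.2 hab.le
  have hb : b ∈ Icc a b := right_mem_Icc.2 hab.le
  have hB0 : 0 ≤ B := (norm_nonneg _).trans (hB a ha)
  have hvar : ∀ u ∈ Icc a b, ‖f' u - f' a‖ ≤ B * (b - a) := fun u hu => by
    have h := (convex_Icc a b).norm_image_sub_le_of_norm_hasDerivWithin_le hf' hB ha hu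
    rw [Real.norm_of_nonneg (sub_nonneg.2 hu.1)] at h
    exact h.trans (by gcongr; exact hu.2)
  -- Since `f a = f b`, this function changes by `-(b - a) • f' a` over `[a, b]`.
  have hg : ∀ u ∈ Icc a b, HasDerivWithinAt (fun u => f u - (u - a) • f' a)
      (f' u - f' a) (Icc a b) u := fun u hu =>
    ((hf u hu).sub (((hasDerivWithinAt_id u _).sub_const a).smul_const (f' a))).congr_deriv
      (by rw [one_smul])
  have hend := (convex_Icc a b).norm_image_sub_le_of_norm_hasDerivWithin_le hg hvar ha hb
  rw [hfab, sub_self, zero_smul, sub_zero, sub_sub_cancel_left, norm_neg, norm_smul,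
    Real.norm_of_nonneg (sub_nonneg.2 hab.le), mul_comm] at hend
  have hstart : ‖f' a‖ ≤ B * (b - a) := le_of_mul_le_mul_right hend (sub_pos.2 hab)
  calc ‖f' t‖ ≤ ‖f' a‖ + ‖f' t - f' a‖ := norm_le_norm_add_norm_sub' _ _
    _ ≤ B * (b - a) + B * (b - a) := add_le_add hstart (hvar t ht)
    _ = 2 * B * (b - a) := by ring

theorem eqOn_of_eq_of_norm_deriv2_le_mul {K : ℝ} (hab : a < b)
    (hf : ∀ t ∈ Icc a b, HasDerivWithinAt f (f' t) (Icc a b) t)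
    (hf' : ∀ t ∈ Icc a b, HasDerivWithinAt f' (f'' t) (Icc a b) t)
    (hK : 2 * K * (b - a) < 1) (hfab : f a = f b)
    (hbound : ∀ N, (∀ t ∈ Icc a b, ‖f' t‖ ≤ N) → ∀ t ∈ Icc a b, ‖f'' t‖ ≤ K * N) :
    ∀ t ∈ Icc a b, f t = f a := by
  obtain ⟨s, hs, hmax⟩ := isCompact_Icc.exists_isMaxOn (nonempty_Icc.2 hab.le)
    (fun t ht => (hf' t ht).continuousWithinAt.norm)
  have hN : ∀ t ∈ Icc a b, ‖f' t‖ ≤ ‖f' s‖ := fun t ht => hmax ht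
  have hle := norm_deriv_le_of_eq_of_norm_deriv2_le hab hf hf' (hbound _ hN) hfab hs
  have hzero : ∀ t ∈ Icc a b, ‖f' t‖ ≤ 0 := fun t ht =>
    (hN t ht).trans (by nlinarith [norm_nonneg (f' s)])
  intro t ht
  have h := (convex_Icc a b).norm_image_sub_le_of_norm_hasDerivWithin_le hf hzero
    (left_mem_Icc.2 hab.le) ht
  rwa [zero_mul, norm_le_zero_iff, sub_eq_zero] at h

end TwoPointBoundary

theorem norm_le_of_add_apply_add_apply_add_smul_eq_zero {V : Type*} [NormedAddCommGroup V]
    [NormedSpace ℝ V] {w x v z : V} {a₁ a₂ : V →L[ℝ] V} {c : ℝ}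
    (h : w + a₁ x + a₂ v + c • z = 0) :
    ‖w‖ ≤ ‖a₁‖ * ‖x‖ + ‖a₂‖ * ‖v‖ + |c| * ‖z‖ := by
  rw [show w = -(a₁ x + a₂ v + c • z) by rw [eq_neg_iff_add_eq_zero, ← h]; abel, norm_neg]
  refine norm_add₃_le.trans (add_le_add_three (a₁.le_opNorm x) (a₂.le_opNorm v) ?_)
  rw [norm_smul, Real.norm_eq_abs]

/-- **Proposition `propisolatedinstant` (in a parallel frame).** Let `V` be a
finite-dimensional real normed vector space, `T > 0`, `A₁, A₂ : [0,T] → End(V)`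
continuous, `ξ : [0,T] → V` continuous and `φ : V → ℝ` linear. Then there is
`ε ∈ (0,T]` such that for every `t₀ ∈ (0,ε]` the only twice continuously differentiable
solution `J : [0,t₀] → V` of `J'' + A₁ t (J t) + A₂ t (J' t) + φ(J'(0)) • ξ t = 0`
vanishing at both `t = 0` and `t = t₀` is `J ≡ 0`. -/
theorem no_conjugate_instant_near_zero
    (V : Type*) [NormedAddCommGroup V] [NormedSpace ℝ V] [FiniteDimensional ℝ V]
    (T : ℝ) (hT : 0 < T)
    (A₁ A₂ : ℝ → (V →L[ℝ] V))
    (hA₁ : ContinuousOn A₁ (Set.Icc 0 T)) (hA₂ : ContinuousOn A₂ (Set.Icc 0 T))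
    (ξ : ℝ → V) (hξ : ContinuousOn ξ (Set.Icc 0 T))
    (φ : V →ₗ[ℝ] ℝ) :
    ∃ ε : ℝ, 0 < ε ∧ ε ≤ T ∧
      ∀ t₀ : ℝ, 0 < t₀ → t₀ ≤ ε →
        ∀ J J' J'' : ℝ → V,
          (∀ t ∈ Set.Icc (0:ℝ) t₀, HasDerivWithinAt J (J' t) (Set.Icc 0 t₀) t) →
          (∀ t ∈ Set.Icc (0:ℝ) t₀, HasDerivWithinAt J' (J'' t) (Set.Icc 0 t₀) t) →
          ContinuousOn J'' (Set.Icc 0 t₀) →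
          (∀ t ∈ Set.Icc (0:ℝ) t₀,
            J'' t + A₁ t (J t) + A₂ t (J' t) + φ (J' 0) • ξ t = 0) →
          J 0 = 0 → J t₀ = 0 →
          ∀ t ∈ Set.Icc (0:ℝ) t₀, J t = 0 := by
  obtain ⟨M₁, hM₁0, hM₁⟩ := isCompact_Icc.exists_pos_bound_of_continuousOn hA₁
  obtain ⟨M₂, hM₂0, hM₂⟩ := isCompact_Icc.exists_pos_bound_of_continuousOn hA₂
  obtain ⟨M₃, hM₃0, hM₃⟩ := isCompact_Icc.exists_pos_bound_of_continuousOn hξ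
  set Φ := LinearMap.toContinuousLinearMap φ
  set K := M₁ * T + M₂ + ‖Φ‖ * M₃
  obtain ⟨c, hc, hKc⟩ := exists_pos_mul_lt one_pos (2 * K)
  refine ⟨min T c, lt_min hT hc, min_le_left _ _,
    fun t₀ ht₀ ht₀ε J J' J'' hJ hJ' _ hJac hJ0 hJt₀ => ?_⟩
  have hsub : Icc 0 t₀ ⊆ Icc 0 T := Icc_subset_Icc_right (ht₀ε.trans (min_le_left _ _))
  have hsmall : 2 * K * (t₀ - 0) < 1 :=
    lt_of_le_of_lt (by gcongr; linarith [min_le_right T c]) hKc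
  refine fun t ht => (eqOn_of_eq_of_norm_deriv2_le_mul ht₀ hJ hJ' hsmall
    (hJ0.trans hJt₀.symm) ?_ t ht).trans hJ0
  intro N hN t ht
  have hN0 : 0 ≤ N := (norm_nonneg _).trans (hN t ht)
  have hJN : ‖J t‖ ≤ N * T := by
    have h := (convex_Icc 0 t₀).norm_image_sub_le_of_norm_hasDerivWithin_le hJ hN
      (left_mem_Icc.2 ht₀.le) ht
    rw [hJ0, sub_zero, sub_zero, Real.norm_of_nonneg ht.1] at h
    exact h.trans (by gcongr; exact (hsub ht).2)
  have hφ : |φ (J' 0)| ≤ ‖Φ‖ * N :=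
    (Φ.le_opNorm (J' 0)).trans (by gcongr; exact hN 0 (left_mem_Icc.2 ht₀.le))
  calc ‖J'' t‖ ≤ ‖A₁ t‖ * ‖J t‖ + ‖A₂ t‖ * ‖J' t‖ + |φ (J' 0)| * ‖ξ t‖ :=
        norm_le_of_add_apply_add_apply_add_smul_eq_zero (hJac t ht)
    _ ≤ M₁ * (N * T) + M₂ * N + ‖Φ‖ * N * M₃ := by
        gcongr
        exacts [hM₁ t (hsub ht), hM₂ t (hsub ht), hN t ht, hM₃ t (hsub ht)]
    _ = K * N := by ring
end
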